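/- The function ψ(v) = g(G⁻¹(v))·G⁻¹(v) is differentiable on ℝ with ψ'(v) = 1 + g'(G⁻¹(v))·G⁻¹(v)/g(G⁻¹(v)), and 0 ≤ ψ'(v) ≤ 1 for every v ∈ ℝ; moreover |ψ(v)| ≤ (2/√3)|v| for every v ∈ ℝ. -/

import Mathlib

open Real Filter Set

noncomputable def alph : ℝ := (9 + 3 * Real.sqrt 5) / 2

noncomputable def bet : ℝ := 2 * alph ^ ((3 : ℝ) / 2) * Real.sqrt (alph - 1)

noncomputable def g (k s : ℝ) : ℝ :=
  if |s| < 1 / Real.sqrt (alph * k) then Real.sqrt (1 - k * s ^ 2)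
  else 1 / (bet * k * s ^ 2) + Real.sqrt 3 / 2

noncomputable def G (k t : ℝ) : ℝ := ∫ s in (0 : ℝ)..t, g k s

open Topology
open scoped goldenRatio

/-!
Writing `u = k s²`, `g k s = P u` for a profile `P` independent of `k`: `P u = √(1 - u)` below
`u = α⁻¹` and `P u = (β u)⁻¹ + √3/2` above it. The two branches agree to first order at `α⁻¹`, so
`g` is differentiable with `g'(s) s = 2 u P'(u)`, and each branch satisfies `√3/2 ≤ P ≤ 1` and
`-P u ≤ 2 u P'(u) ≤ 0` for `u ≥ 0`. By the inverse function rule, `ψ = (g ∘ G⁻¹) · G⁻¹` has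
derivative `1 + g'(t) t / g(t)` at `v = G t`, which lies in `[0, 1]`; and
`|ψ v| ≤ |t| ≤ (2/√3) |G t|` because `G' = g ≥ √3/2`.
-/

theorem HasDerivAt.of_nhdsLE_nhdsGE {f f₁ f₂ : ℝ → ℝ} {a d : ℝ}
    (h₁ : HasDerivAt f₁ d a) (h₂ : HasDerivAt f₂ d a)
    (e₁ : f =ᶠ[𝓝[≤] a] f₁) (e₂ : f =ᶠ[𝓝[≥] a] f₂) : HasDerivAt f d a := by
  have hl := h₁.hasDerivWithinAt.congr_of_eventuallyEq e₁ (e₁.eq_of_nhdsWithin self_mem_Iic)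
  have hr := h₂.hasDerivWithinAt.congr_of_eventuallyEq e₂ (e₂.eq_of_nhdsWithin self_mem_Ici)
  have h := hl.union hr
  rwa [Iic_union_Ici, hasDerivWithinAt_univ] at h

theorem hasDerivAt_rightInverse {G g Ginv : ℝ → ℝ} (hG : ∀ t, HasDerivAt G (g t) t)
    (hg : ∀ t, 0 < g t) (hR : Function.RightInverse Ginv G) (v : ℝ) :
    HasDerivAt Ginv (g (Ginv v))⁻¹ v :=
  let e := (strictMono_of_hasDerivAt_pos hG hg).orderIsoOfRightInverse G Ginv hR
  (hG (Ginv v)).of_local_left_inverse (e.symm.continuous.continuousAt : ContinuousAt Ginv v)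
    (hg _).ne' (Eventually.of_forall hR)

theorem hasDerivAt_mul_rightInverse {G g g' Ginv : ℝ → ℝ} (hG : ∀ t, HasDerivAt G (g t) t)
    (hg : ∀ t, HasDerivAt g (g' t) t) (hpos : ∀ t, 0 < g t)
    (hR : Function.RightInverse Ginv G) (v : ℝ) :
    HasDerivAt (fun w => g (Ginv w) * Ginv w) (1 + g' (Ginv v) * Ginv v / g (Ginv v)) v := by
  refine (((hg _).mul (hasDerivAt_id' _)).comp v
    (hasDerivAt_rightInverse hG hpos hR v)).congr_deriv ?_
  field_simp [(hpos (Ginv v)).ne']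
  ring

theorem mul_abs_le_abs_of_hasDerivAt {G g : ℝ → ℝ} {c : ℝ} (hG : ∀ t, HasDerivAt G (g t) t)
    (hG0 : G 0 = 0) (hc : ∀ t, c ≤ g t) (t : ℝ) : c * |t| ≤ |G t| := by
  have hmono : Monotone fun t => G t - c * t :=
    monotone_of_hasDerivAt_nonneg
      (fun t => (hG t).sub ((hasDerivAt_id' t).const_mul c) |>.congr_deriv (by ring))
      fun t => sub_nonneg.2 (hc t)
  rcases le_total 0 t with ht | ht
  · rw [abs_of_nonneg ht]; linarith [hmono ht, le_abs_self (G t)]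
  · rw [abs_of_nonpos ht]; linarith [hmono ht, neg_abs_le (G t)]

-- `α = 3φ²` turns every identity between `α`, `β` and `√(1 - α⁻¹)` into a polynomial identity in
-- the golden ratio `φ`, reduced by `φ² = φ + 1`.
theorem alph_eq : alph = 3 * φ ^ 2 := by
  rw [alph, goldenRatio]
  linear_combination (-3 / 4 : ℝ) * Real.sq_sqrt (show (0 : ℝ) ≤ 5 by norm_num)

theorem four_le_alph : 4 ≤ alph := by
  rw [alph_eq, goldenRatio_sq]; linarith [one_lt_goldenRatio]

theorem alph_pos : 0 < alph := by linarith [four_le_alph]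

theorem inv_alph_le_quarter : alph⁻¹ ≤ 1 / 4 := by
  rw [one_div]; exact inv_anti₀ (by norm_num) four_le_alph

theorem sqrt_alph : √alph = √3 * φ := by
  rw [alph_eq, sqrt_mul (by norm_num), sqrt_sq goldenRatio_pos.le]

theorem bet_eq : bet = 6 * √3 * φ ^ 5 := by
  have h32 : alph ^ ((3 : ℝ) / 2) = alph * √alph := by
    rw [show (3 : ℝ) / 2 = 1 + 1 / 2 by norm_num, rpow_add alph_pos, rpow_one, sqrt_eq_rpow]
  have hsub : alph - 1 = (φ ^ 2) ^ 2 := by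
    rw [alph_eq]
    have hφ := goldenRatio_sq
    -- `φ` is an `abbrev`: generalizing it keeps `ring` from unfolding it to `(1 + √5) / 2`
    generalize φ = x at hφ ⊢
    linear_combination (-(x ^ 2) - x + 1) * hφ
  rw [bet, h32, sqrt_alph, hsub, sqrt_sq (by positivity), alph_eq]
  ring

theorem bet_pos : 0 < bet := by
  rw [bet_eq]; have := goldenRatio_pos; positivity

theorem sqrt_one_sub_inv_alph : √(1 - alph⁻¹) = φ / √3 := by
  rw [sqrt_eq_iff_mul_self_eq_of_pos (by have := goldenRatio_pos; positivity), alph_eq]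
  have hφ := goldenRatio_sq
  have hφ0 := goldenRatio_ne_zero
  generalize φ = x at hφ hφ0 ⊢
  field_simp
  rw [sq_sqrt (by norm_num)]
  linear_combination (3 * x ^ 2 + 3 * x - 3) * hφ

theorem sqrt_one_sub_inv_alph_eq_inv_bet_mul_add : √(1 - alph⁻¹) = (bet * alph⁻¹)⁻¹ + √3 / 2 := by
  rw [sqrt_one_sub_inv_alph, bet_eq, alph_eq]
  have hφ := goldenRatio_sq
  have hφ0 := goldenRatio_ne_zero
  generalize φ = x at hφ hφ0 ⊢
  field_simp
  rw [sq_sqrt (by norm_num)]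
  linear_combination 6 * (2 * x ^ 2 - x + 1) * hφ

theorem neg_one_div_two_mul_sqrt_one_sub_inv_alph :
    -1 / (2 * √(1 - alph⁻¹)) = -(bet * alph⁻¹ ^ 2)⁻¹ := by
  rw [sqrt_one_sub_inv_alph, bet_eq, alph_eq]
  field_simp [goldenRatio_ne_zero]
  rw [sq_sqrt (by norm_num)]
  ring

noncomputable def gProfile (u : ℝ) : ℝ :=
  if u < alph⁻¹ then √(1 - u) else (bet * u)⁻¹ + √3 / 2

noncomputable def gProfileDeriv (u : ℝ) : ℝ :=
  if u < alph⁻¹ then -1 / (2 * √(1 - u)) else -(bet * u ^ 2)⁻¹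

theorem gProfile_of_le {u : ℝ} (hu : u ≤ alph⁻¹) : gProfile u = √(1 - u) := by
  rcases hu.lt_or_eq with hu | rfl
  · exact if_pos hu
  · rw [gProfile, if_neg (lt_irrefl _), sqrt_one_sub_inv_alph_eq_inv_bet_mul_add]

theorem gProfile_of_ge {u : ℝ} (hu : alph⁻¹ ≤ u) : gProfile u = (bet * u)⁻¹ + √3 / 2 :=
  if_neg (not_lt.2 hu)

theorem gProfileDeriv_of_le {u : ℝ} (hu : u ≤ alph⁻¹) :
    gProfileDeriv u = -1 / (2 * √(1 - u)) := by
  rcases hu.lt_or_eq with hu | rfl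
  · exact if_pos hu
  · rw [gProfileDeriv, if_neg (lt_irrefl _), neg_one_div_two_mul_sqrt_one_sub_inv_alph]

theorem gProfileDeriv_of_ge {u : ℝ} (hu : alph⁻¹ ≤ u) : gProfileDeriv u = -(bet * u ^ 2)⁻¹ :=
  if_neg (not_lt.2 hu)

theorem hasDerivAt_sqrt_one_sub {u : ℝ} (hu : u < 1) :
    HasDerivAt (fun x => √(1 - x)) (-1 / (2 * √(1 - u))) u :=
  ((hasDerivAt_id u).const_sub 1).sqrt (sub_ne_zero.2 hu.ne')

theorem hasDerivAt_inv_bet_mul_add {u : ℝ} (hu : u ≠ 0) :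
    HasDerivAt (fun x => (bet * x)⁻¹ + √3 / 2) (-(bet * u ^ 2)⁻¹) u := by
  refine (((hasDerivAt_id' u).const_mul bet).inv (by simp [bet_pos.ne', hu])).add_const _
    |>.congr_deriv ?_
  field_simp [bet_pos.ne']

theorem hasDerivAt_gProfile (u : ℝ) : HasDerivAt gProfile (gProfileDeriv u) u := by
  have hpos : 0 < alph⁻¹ := inv_pos.2 alph_pos
  have hlt : alph⁻¹ < 1 := inv_alph_le_quarter.trans_lt (by norm_num)
  rcases lt_trichotomy u alph⁻¹ with hu | rfl | hu
  · rw [gProfileDeriv_of_le hu.le]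
    exact (hasDerivAt_sqrt_one_sub (hu.trans hlt)).congr_of_eventuallyEq
      (eventually_lt_nhds hu |>.mono fun x hx => gProfile_of_le hx.le)
  · rw [gProfileDeriv_of_ge le_rfl]
    refine HasDerivAt.of_nhdsLE_nhdsGE ?_ (hasDerivAt_inv_bet_mul_add hpos.ne')
      (eventually_mem_nhdsWithin.mono fun x hx => gProfile_of_le hx)
      (eventually_mem_nhdsWithin.mono fun x hx => gProfile_of_ge hx)
    rw [← neg_one_div_two_mul_sqrt_one_sub_inv_alph]
    exact hasDerivAt_sqrt_one_sub hlt
  · rw [gProfileDeriv_of_ge hu.le]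
    exact (hasDerivAt_inv_bet_mul_add (hpos.trans hu).ne').congr_of_eventuallyEq
      (eventually_gt_nhds hu |>.mono fun x hx => gProfile_of_ge hx.le)

theorem inv_bet_mul_le {u : ℝ} (hu : alph⁻¹ ≤ u) : (bet * u)⁻¹ ≤ 1 - √3 / 2 := by
  have h : (bet * u)⁻¹ ≤ (bet * alph⁻¹)⁻¹ :=
    inv_anti₀ (by have := alph_pos; have := bet_pos; positivity)
      (mul_le_mul_of_nonneg_left hu bet_pos.le)
  have h1 : √(1 - alph⁻¹) ≤ 1 := sqrt_le_one.2 (by linarith [inv_pos.2 alph_pos])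
  linarith [sqrt_one_sub_inv_alph_eq_inv_bet_mul_add]

theorem sqrt_three_div_two_le_gProfile (u : ℝ) : √3 / 2 ≤ gProfile u := by
  rcases le_total u alph⁻¹ with hu | hu
  · have : 3 / 4 ≤ 1 - u := by linarith [inv_alph_le_quarter]
    rw [gProfile_of_le hu, le_sqrt (by positivity) (by linarith), div_pow, sq_sqrt (by norm_num)]
    linarith
  · rw [gProfile_of_ge hu]
    have := (inv_pos.2 alph_pos).trans_le hu
    have := bet_pos
    have : 0 < (bet * u)⁻¹ := by positivity
    linarith

theorem gProfile_le_one {u : ℝ} (hu : 0 ≤ u) : gProfile u ≤ 1 := by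
  rcases le_total u alph⁻¹ with h | h
  · rw [gProfile_of_le h]; exact sqrt_le_one.2 (by linarith)
  · rw [gProfile_of_ge h]; linarith [inv_bet_mul_le h]

theorem gProfileDeriv_nonpos (u : ℝ) : gProfileDeriv u ≤ 0 := by
  rcases le_total u alph⁻¹ with h | h
  · rw [gProfileDeriv_of_le h, neg_div]; exact neg_nonpos.2 (by positivity)
  · rw [gProfileDeriv_of_ge h]
    exact neg_nonpos.2 (inv_nonneg.2 (by have := bet_pos; positivity))

theorem neg_gProfile_le_two_mul_gProfileDeriv (u : ℝ) :
    -gProfile u ≤ 2 * u * gProfileDeriv u := by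
  rcases le_total u alph⁻¹ with h | h
  · rw [gProfile_of_le h, gProfileDeriv_of_le h]
    have h1 : 0 < 1 - u := by linarith [inv_alph_le_quarter]
    have hs : 0 < √(1 - u) := sqrt_pos.2 h1
    rw [show 2 * u * (-1 / (2 * √(1 - u))) = -(u / √(1 - u)) by field_simp, neg_le_neg_iff,
      div_le_iff₀ hs, mul_self_sqrt h1.le]
    linarith [inv_alph_le_quarter]
  · rw [gProfile_of_ge h, gProfileDeriv_of_ge h]
    have hu : u ≠ 0 := ((inv_pos.2 alph_pos).trans_le h).ne'
    rw [show 2 * u * -(bet * u ^ 2)⁻¹ = -2 * (bet * u)⁻¹ by field_simp [bet_pos.ne']]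
    linarith [inv_bet_mul_le h, one_le_sqrt.2 (show (1 : ℝ) ≤ 3 by norm_num)]

section
variable {k : ℝ} (hk : 0 < k)
include hk

theorem g_eq_gProfile (s : ℝ) : g k s = gProfile (k * s ^ 2) := by
  have hc : |s| < 1 / √(alph * k) ↔ k * s ^ 2 < alph⁻¹ := by
    rw [← sqrt_sq_eq_abs, one_div, ← sqrt_inv, sqrt_lt_sqrt_iff (sq_nonneg s), mul_inv,
      lt_mul_inv_iff₀ hk, mul_comm (s ^ 2)]
  simp only [g, gProfile, hc]
  rw [one_div, mul_assoc]

theorem hasDerivAt_g (s : ℝ) :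
    HasDerivAt (g k) (gProfileDeriv (k * s ^ 2) * (k * (2 * s))) s := by
  rw [show g k = fun s => gProfile (k * s ^ 2) from funext (g_eq_gProfile hk)]
  exact (hasDerivAt_gProfile _).comp s
    ((hasDerivAt_pow 2 s).const_mul k |>.congr_deriv (by ring))

theorem deriv_g_mul_self (s : ℝ) :
    deriv (g k) s * s = 2 * (k * s ^ 2) * gProfileDeriv (k * s ^ 2) := by
  rw [(hasDerivAt_g hk s).deriv]; ring

theorem continuous_g : Continuous (g k) :=
  continuous_iff_continuousAt.2 fun s => (hasDerivAt_g hk s).continuousAt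

theorem hasDerivAt_G (t : ℝ) : HasDerivAt (G k) (g k t) t :=
  ((continuous_g hk).integral_hasStrictDerivAt 0 t).hasDerivAt

theorem sqrt_three_div_two_le_g (s : ℝ) : √3 / 2 ≤ g k s :=
  g_eq_gProfile hk s ▸ sqrt_three_div_two_le_gProfile _

theorem g_pos (s : ℝ) : 0 < g k s :=
  lt_of_lt_of_le (by positivity) (sqrt_three_div_two_le_g hk s)

theorem g_le_one (s : ℝ) : g k s ≤ 1 := by
  rw [g_eq_gProfile hk]; exact gProfile_le_one (by positivity)

theorem neg_g_le_deriv_g_mul_self (s : ℝ) : -g k s ≤ deriv (g k) s * s := by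
  rw [g_eq_gProfile hk, deriv_g_mul_self hk]; exact neg_gProfile_le_two_mul_gProfileDeriv _

theorem deriv_g_mul_self_nonpos (s : ℝ) : deriv (g k) s * s ≤ 0 := by
  rw [deriv_g_mul_self hk]
  exact mul_nonpos_of_nonneg_of_nonpos (by positivity) (gProfileDeriv_nonpos _)

end

theorem stmt13_general (k : ℝ) (hk : 0 < k) (Ginv : ℝ → ℝ)
    (hR : Function.RightInverse Ginv (G k)) :
    (∀ v : ℝ, HasDerivAt (fun w : ℝ => g k (Ginv w) * Ginv w)
      (1 + deriv (g k) (Ginv v) * Ginv v / g k (Ginv v)) v) ∧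
    (∀ v : ℝ, 0 ≤ 1 + deriv (g k) (Ginv v) * Ginv v / g k (Ginv v) ∧
      1 + deriv (g k) (Ginv v) * Ginv v / g k (Ginv v) ≤ 1) ∧
    (∀ v : ℝ, |g k (Ginv v) * Ginv v| ≤ 2 / Real.sqrt 3 * |v|) := by
  have hg : ∀ t, HasDerivAt (g k) (deriv (g k) t) t := fun t =>
    (hasDerivAt_g hk t).differentiableAt.hasDerivAt
  refine ⟨hasDerivAt_mul_rightInverse (hasDerivAt_G hk) hg (g_pos hk) hR, fun v => ?_,
    fun v => ?_⟩
  · have hpos := g_pos hk (Ginv v)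
    constructor
    · have : -1 ≤ deriv (g k) (Ginv v) * Ginv v / g k (Ginv v) :=
        (le_div_iff₀ hpos).2 (by linarith [neg_g_le_deriv_g_mul_self hk (Ginv v)])
      linarith
    · linarith [div_nonpos_of_nonpos_of_nonneg (deriv_g_mul_self_nonpos hk (Ginv v)) hpos.le]
  · have hG := mul_abs_le_abs_of_hasDerivAt (hasDerivAt_G hk) intervalIntegral.integral_same
      (sqrt_three_div_two_le_g hk) (Ginv v)
    rw [hR v] at hG
    calc |g k (Ginv v) * Ginv v| ≤ |Ginv v| := by
          rw [abs_mul, abs_of_pos (g_pos hk _)]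
          exact mul_le_of_le_one_left (abs_nonneg _) (g_le_one hk _)
      _ ≤ 2 / √3 * |v| := by
          rw [div_mul_eq_mul_div, le_div_iff₀ (by positivity)]
          linarith

/-- ψ(v) = g(G⁻¹(v))·G⁻¹(v) is differentiable with
ψ'(v) = 1 + g'(G⁻¹(v))·G⁻¹(v)/g(G⁻¹(v)), 0 ≤ ψ'(v) ≤ 1, and |ψ(v)| ≤ (2/√3)|v|. -/
theorem stmt13 (k : ℝ) (hk : 0 < k) (Ginv : ℝ → ℝ)
    (hL : Function.LeftInverse Ginv (G k)) (hR : Function.RightInverse Ginv (G k)) :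
    (∀ v : ℝ, HasDerivAt (fun w : ℝ => g k (Ginv w) * Ginv w)
      (1 + deriv (g k) (Ginv v) * Ginv v / g k (Ginv v)) v) ∧
    (∀ v : ℝ, 0 ≤ 1 + deriv (g k) (Ginv v) * Ginv v / g k (Ginv v) ∧
      1 + deriv (g k) (Ginv v) * Ginv v / g k (Ginv v) ≤ 1) ∧
    (∀ v : ℝ, |g k (Ginv v) * Ginv v| ≤ 2 / Real.sqrt 3 * |v|) :=
  stmt13_general k hk Ginv hR
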